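/- Let (R, m) be a Noetherian local ring and I an m-primary ideal. If f ∈ I is a superficial element such that f is a nonzerodivisor and dim R/(f) = dim R − 1, then e(I·(R/(f)), R/(f)) = e(I, R). -/

import Mathlib

/-!
By Artin–Rees, `(Iⁿ : f) ⊆ Iⁿ⁻ᵏ` for a nonzerodivisor `f` and some fixed `k`, so for large `n`
superficiality gives `(Iⁿ⁺¹ : f) = Iⁿ`. Multiplication by `f` then yields exact sequences
`0 → R/Iⁿ → R/Iⁿ⁺¹ → R/((f) + Iⁿ⁺¹) → 0`: eventually, the first difference of the Hilbert–Samuel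
function of `I` is the Hilbert–Samuel function of `I·(R/(f))`. All these lengths are finite since
`R/Iⁿ` is Artinian, so additivity survives the truncation to `ℕ` in `moduleLength`. By
Stolz–Cesàro, if `A n ~ (e'/(d-1)!) n^(d-1)` then its partial sums grow like `(e'/d!) n^d`, whence
`e = e'`.
-/

/-- The length of an `R`-module `M`, computed as the Krull dimension of its
lattice of submodules (equal to the usual length for finite-length modules). -/
noncomputable def moduleLength (R M : Type*) [CommRing R] [AddCommGroup M] [Module R M] : ℕ :=
  ((Order.krullDim (Submodule R M)).unbotD 0).toNat

/-- `e` is the Hilbert–Samuel multiplicity of the ideal `I` in the `d`-dimensional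
ring `R`: `e = lim_n d! · length(R/Iⁿ)/nᵈ`, i.e. `d!` times the leading coefficient
of the Hilbert–Samuel polynomial `n ↦ length(R/Iⁿ)`. -/
noncomputable def HasHSMultiplicity (R : Type*) [CommRing R] (I : Ideal R) (d : ℕ) (e : ℝ) : Prop :=
  Filter.Tendsto
    (fun n : ℕ => ((Nat.factorial d : ℝ) * (moduleLength R (R ⧸ I ^ n) : ℝ)) / (n : ℝ) ^ d)
    Filter.atTop (nhds e)

/-- `f` is a superficial element for the ideal `I`:
`(I^(n+1) : f) ∩ I^c = I^n` for all large `n`. -/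
def Superficial {R : Type*} [CommRing R] (I : Ideal R) (f : R) : Prop :=
  ∃ c : ℕ, ∀ n ≥ c, (I ^ (n + 1)).colon (Ideal.span {f}) ⊓ I ^ c = I ^ n

open Filter Topology Asymptotics Finset IsLocalRing

section

variable {R : Type*} [CommRing R]

lemma moduleLength_eq_toNat_length (M : Type*) [AddCommGroup M] [Module R M] :
    moduleLength R M = (Module.length R M).toNat := by
  rw [moduleLength, ← Module.coe_length, WithBot.unbotD_coe]

lemma length_quotient_quotient_map (J K : Ideal R) :
    Module.length (R ⧸ J) ((R ⧸ J) ⧸ K.map (Ideal.Quotient.mk J)) =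
      Module.length R (R ⧸ (J ⊔ K)) := by
  rw [← Module.length_eq_of_surjective Ideal.Quotient.mk_surjective]
  exact (DoubleQuot.quotQuotEquivQuotSupₐ R J K).toLinearEquiv.length_eq

-- The injectivity of multiplication by `f` on `R/Iⁿ` is exactly the hypothesis on the colon ideal.
lemma length_quotient_pow_succ {I : Ideal R} {f : R} {n : ℕ}
    (hcolon : (I ^ (n + 1)).colon (Ideal.span {f}) = I ^ n) :
    Module.length R (R ⧸ I ^ (n + 1)) =
      Module.length R (R ⧸ I ^ n) + Module.length R (R ⧸ (Ideal.span {f} ⊔ I ^ (n + 1))) := by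
  have hcomap : Submodule.comap (LinearMap.mulLeft R f) (I ^ (n + 1)) = I ^ n := by
    rw [← hcolon]
    ext x
    simp [mul_comm]
  have hrange : LinearMap.range (LinearMap.mulLeft R f) = Ideal.span {f} := by
    ext x
    simp [Ideal.mem_span_singleton', mul_comm]
  refine Module.length_eq_add_of_exact ((I ^ n).mapQ _ _ hcomap.ge)
    (Submodule.factor le_sup_right) ?_ (Submodule.factor_surjective _) ?_
  · rw [← LinearMap.ker_eq_bot, Submodule.ker_mapQ, hcomap, Submodule.mkQ_map_self]
  · rw [LinearMap.exact_iff, Submodule.ker_mapQ, Submodule.range_mapQ, Submodule.comap_id,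
      Submodule.map_sup, Submodule.mkQ_map_self, sup_bot_eq, hrange]

variable [IsNoetherianRing R]

lemma isArtinianRing_quotient_pow [IsLocalRing R] {I : Ideal R}
    (hI : I.radical = maximalIdeal R) (n : ℕ) : IsArtinianRing (R ⧸ I ^ n) := by
  have : Ring.KrullDimLE 0 (R ⧸ I ^ n) := Ring.krullDimLE_zero_iff.mpr fun P hP ↦ by
    have hQ := hP.comap (Ideal.Quotient.mk (I ^ n))
    have hle : I ^ n ≤ P.comap (Ideal.Quotient.mk (I ^ n)) := by
      simpa using Ideal.ker_le_comap (Ideal.Quotient.mk (I ^ n)) (K := P)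
    have hmax : P.comap (Ideal.Quotient.mk (I ^ n)) = maximalIdeal R :=
      le_antisymm (le_maximalIdeal hQ.ne_top)
        (hI ▸ hQ.radical_le_iff.mpr (hQ.le_of_pow_le hle))
    exact Ideal.isMaximal_of_isIntegral_of_isMaximal_comap _ (hmax ▸ maximalIdeal.isMaximal R)
  exact IsNoetherianRing.isArtinianRing_of_krullDimLE_zero

lemma length_quotient_pow_ne_top [IsLocalRing R] {I : Ideal R}
    (hI : I.radical = maximalIdeal R) (n : ℕ) : Module.length R (R ⧸ I ^ n) ≠ ⊤ := by
  have := isArtinianRing_quotient_pow hI n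
  rw [Module.length_eq_of_surjective (R := R ⧸ I ^ n) Ideal.Quotient.mk_surjective]
  exact Module.length_ne_top

lemma moduleLength_quotient_pow_succ [IsLocalRing R] {I : Ideal R}
    (hI : I.radical = maximalIdeal R) {f : R} {n : ℕ}
    (hcolon : (I ^ (n + 1)).colon (Ideal.span {f}) = I ^ n) :
    moduleLength R (R ⧸ I ^ (n + 1)) =
      moduleLength R (R ⧸ I ^ n) + moduleLength R (R ⧸ (Ideal.span {f} ⊔ I ^ (n + 1))) := by
  have hsum := length_quotient_pow_succ hcolon
  have hfin := length_quotient_pow_ne_top hI (n + 1)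
  rw [hsum, Ne, ENat.add_eq_top, not_or] at hfin
  simp only [moduleLength_eq_toNat_length, hsum, ENat.toNat_add hfin.1 hfin.2]

lemma exists_colon_pow_le (I : Ideal R) {f : R} (hf : f ∈ nonZeroDivisors R) :
    ∃ k, ∀ n ≥ k, (I ^ n).colon (Ideal.span {f}) ≤ I ^ (n - k) := by
  obtain ⟨k, hk⟩ := Ideal.exists_pow_inf_eq_pow_smul I (Ideal.span {f} : Submodule R R)
  refine ⟨k, fun n hn x hx ↦ ?_⟩
  have hxf : x * f ∈ I ^ (n - k) • Ideal.span {f} := by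
    have : x * f ∈ I ^ n • (⊤ : Submodule R R) ⊓ Ideal.span {f} :=
      ⟨by simpa using Ideal.mem_colon_span_singleton.mp hx, Ideal.mem_span_singleton'.mpr ⟨x, rfl⟩⟩
    rw [hk n hn] at this
    exact Submodule.smul_mono le_rfl inf_le_right this
  obtain ⟨y, hy, hyx⟩ := Submodule.mem_smul_span_singleton.mp hxf
  rwa [← (mul_cancel_right_mem_nonZeroDivisors hf).mp hyx]

lemma Superficial.eventually_colon_pow_succ_eq {I : Ideal R} {f : R} (hsup : Superficial I f)
    (hf : f ∈ nonZeroDivisors R) :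
    ∀ᶠ n in atTop, (I ^ (n + 1)).colon (Ideal.span {f}) = I ^ n := by
  obtain ⟨c, hc⟩ := hsup
  obtain ⟨k, hk⟩ := exists_colon_pow_le I hf
  filter_upwards [eventually_ge_atTop (c + k)] with n hn
  rw [← hc n (by omega), left_eq_inf]
  exact (hk (n + 1) (by omega)).trans (Ideal.pow_le_pow_right (by omega))

end

theorem tendsto_div_of_tendsto_sub_div_sub {u v : ℕ → ℝ} {ℓ : ℝ} (hv : StrictMono v)
    (hv_top : Tendsto v atTop atTop)
    (h : Tendsto (fun n ↦ (u (n + 1) - u n) / (v (n + 1) - v n)) atTop (𝓝 ℓ)) :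
    Tendsto (fun n ↦ u n / v n) atTop (𝓝 ℓ) := by
  have hg : ∀ n, 0 < v (n + 1) - v n := fun n ↦ sub_pos.2 (hv n.lt_succ_self)
  have hstep : (fun n ↦ u (n + 1) - u n - ℓ * (v (n + 1) - v n)) =o[atTop]
      fun n ↦ v (n + 1) - v n := by
    refine (isLittleO_iff_tendsto fun n h0 ↦ absurd h0 (hg n).ne').2 ?_
    simpa [sub_div, mul_div_cancel_right₀ _ (hg _).ne'] using h.sub_const ℓ
  have hsum := hstep.sum_range (fun n ↦ (hg n).le)
    ((tendsto_atTop_add_const_right _ (-v 0) hv_top).congr fun n ↦ by rw [sum_range_sub]; ring)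
  simp only [sum_sub_distrib, sum_range_sub (f := u), sum_range_sub (f := v), ← mul_sum] at hsum
  have hconst : ∀ c : ℝ, (fun _ : ℕ ↦ c) =o[atTop] v := fun c ↦
    isLittleO_const_left.2 (Or.inr (tendsto_norm_atTop_atTop.comp hv_top))
  have hequiv : (fun n ↦ v n - v 0) ~[atTop] v :=
    IsLittleO.isEquivalent ((hconst (-v 0)).congr_left fun n ↦ by simp)
  have hmain : (fun n ↦ u n - ℓ * v n) =o[atTop] v :=
    ((hsum.trans_isBigO hequiv.isBigO).add (hconst (u 0 - ℓ * v 0))).congr_left fun n ↦ by ring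
  have hpos : ∀ᶠ n in atTop, 0 < v n := hv_top.eventually_gt_atTop 0
  refine ((isLittleO_iff_tendsto' (hpos.mono fun n hn h0 ↦ absurd h0 hn.ne')).1 hmain
    |>.add_const ℓ |>.congr' ?_).trans (by simp)
  filter_upwards [hpos] with n hn
  field_simp
  ring

-- Bernoulli's inequality gives `(k+1) nᵏ ≤ (n+1)ᵏ⁺¹ - nᵏ⁺¹ ≤ (k+1) (n+1)ᵏ`.
theorem tendsto_add_one_pow_sub_pow_div (k : ℕ) :
    Tendsto (fun n : ℕ ↦ (((n : ℝ) + 1) ^ (k + 1) - (n : ℝ) ^ (k + 1)) / ((n : ℝ) + 1) ^ k)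
      atTop (𝓝 (k + 1)) := by
  have hlower : ∀ n : ℕ, ((k : ℝ) + 1) * ((n : ℝ) / (n + 1)) ^ k ≤
      (((n : ℝ) + 1) ^ (k + 1) - (n : ℝ) ^ (k + 1)) / ((n : ℝ) + 1) ^ k := fun n ↦ by
    have := pow_add_mul_le_add_pow (n.cast_nonneg : (0 : ℝ) ≤ n) (by positivity) (k + 1) (b := 1)
    rw [div_pow, ← mul_div_assoc]
    gcongr
    push_cast at this
    simp only [mul_one] at this
    linarith
  have hupper : ∀ n : ℕ, (((n : ℝ) + 1) ^ (k + 1) - (n : ℝ) ^ (k + 1)) / ((n : ℝ) + 1) ^ k ≤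
      k + 1 := fun n ↦ by
    have := pow_add_mul_le_add_pow (by positivity : (0 : ℝ) ≤ n + 1) (b := -1)
      (by linarith [(n.cast_nonneg : (0 : ℝ) ≤ n)]) (k + 1)
    rw [div_le_iff₀ (by positivity)]
    push_cast at this
    simp only [add_neg_cancel_right] at this
    linarith
  have hlim : Tendsto (fun n : ℕ ↦ ((k : ℝ) + 1) * ((n : ℝ) / (n + 1)) ^ k) atTop
      (𝓝 ((k + 1) * 1 ^ k)) :=
    ((tendsto_natCast_div_add_atTop (1 : ℝ)).pow k).const_mul _
  rw [one_pow, mul_one] at hlim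
  exact tendsto_of_tendsto_of_tendsto_of_le_of_le hlim tendsto_const_nhds hlower hupper

open Nat in
theorem tendsto_factorial_mul_div_pow_succ {L A : ℕ → ℝ} {k : ℕ} {a : ℝ}
    (hrec : ∀ᶠ n in atTop, L (n + 1) = L n + A (n + 1))
    (hA : Tendsto (fun n : ℕ ↦ k ! * A n / (n : ℝ) ^ k) atTop (𝓝 a)) :
    Tendsto (fun n : ℕ ↦ (k + 1)! * L n / (n : ℝ) ^ (k + 1)) atTop (𝓝 a) := by
  have hA' : Tendsto (fun n : ℕ ↦ k ! * A (n + 1) / ((n : ℝ) + 1) ^ k) atTop (𝓝 a) :=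
    ((tendsto_add_atTop_iff_nat 1).2 hA).congr fun n ↦ by push_cast; rfl
  have hratio : Tendsto
      (fun n ↦ (L (n + 1) - L n) / (((n + 1 : ℕ) : ℝ) ^ (k + 1) - (n : ℝ) ^ (k + 1))) atTop (𝓝 (a / (k + 1)!)) := by
    have := hA'.div ((tendsto_add_one_pow_sub_pow_div k).const_mul (k ! : ℝ)) (by positivity)
    rw [Nat.factorial_succ, Nat.cast_mul, Nat.cast_succ, mul_comm ((k : ℝ) + 1)]
    refine this.congr' ?_
    filter_upwards [hrec] with n hn
    rw [hn, add_sub_cancel_left, Pi.div_apply]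
    push_cast
    field_simp
  have hstolz := tendsto_div_of_tendsto_sub_div_sub
    (fun m n h ↦ pow_lt_pow_left₀ (Nat.cast_lt.2 h) (Nat.cast_nonneg _) k.succ_ne_zero)
    ((tendsto_pow_atTop k.succ_ne_zero).comp tendsto_natCast_atTop_atTop) hratio
  simpa [mul_div_assoc, mul_div_cancel₀ _ (show ((k + 1)! : ℝ) ≠ 0 by positivity)]
    using hstolz.const_mul ((k + 1)! : ℝ)

theorem superficial_multiplicity_eq_general (R : Type*) [CommRing R] [IsNoetherianRing R]
    [IsLocalRing R] (d : ℕ) (hd1 : 1 ≤ d)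
    (I : Ideal R) (hprim : I.radical = IsLocalRing.maximalIdeal R)
    (f : R) (hsup : Superficial I f) (hnzd : f ∈ nonZeroDivisors R)
    (e e' : ℝ)
    (heI : HasHSMultiplicity R I d e)
    (heq : HasHSMultiplicity (R ⧸ Ideal.span {f})
      (I.map (Ideal.Quotient.mk (Ideal.span {f}))) (d - 1) e') :
    e' = e := by
  obtain ⟨k, rfl⟩ := Nat.exists_eq_add_of_le' hd1
  have hrec : ∀ᶠ n in atTop, (moduleLength R (R ⧸ I ^ (n + 1)) : ℝ) =
      moduleLength R (R ⧸ I ^ n) + moduleLength R (R ⧸ (Ideal.span {f} ⊔ I ^ (n + 1))) := by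
    filter_upwards [hsup.eventually_colon_pow_succ_eq hnzd] with n hn
    exact_mod_cast moduleLength_quotient_pow_succ hprim hn
  have hquot (n : ℕ) : moduleLength (R ⧸ Ideal.span {f})
      ((R ⧸ Ideal.span {f}) ⧸ I.map (Ideal.Quotient.mk (Ideal.span {f})) ^ n) =
        moduleLength R (R ⧸ (Ideal.span {f} ⊔ I ^ n)) := by
    rw [moduleLength_eq_toNat_length, moduleLength_eq_toNat_length, ← Ideal.map_pow,
      length_quotient_quotient_map]
  refine tendsto_nhds_unique (tendsto_factorial_mul_div_pow_succ
    (A := fun n ↦ (moduleLength R (R ⧸ (Ideal.span {f} ⊔ I ^ n)) : ℝ)) hrec ?_) heI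
  simpa [HasHSMultiplicity, hquot] using heq

/-- If `f ∈ I` is superficial for the `m`-primary ideal `I`, is a nonzerodivisor and
`dim R/(f) = dim R - 1`, then `e(I·(R/(f)), R/(f)) = e(I, R)`. -/
theorem superficial_multiplicity_eq (R : Type*) [CommRing R] [IsNoetherianRing R]
    [IsLocalRing R] (d : ℕ) (hd1 : 1 ≤ d) (hd : ringKrullDim R = d)
    (I : Ideal R) (hprim : I.radical = IsLocalRing.maximalIdeal R)
    (f : R) (hfI : f ∈ I) (hsup : Superficial I f) (hnzd : f ∈ nonZeroDivisors R)
    (hdq : ringKrullDim (R ⧸ Ideal.span {f}) = (d - 1 : ℕ))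
    (e e' : ℝ)
    (heI : HasHSMultiplicity R I d e)
    (heq : HasHSMultiplicity (R ⧸ Ideal.span {f})
      (I.map (Ideal.Quotient.mk (Ideal.span {f}))) (d - 1) e') :
    e' = e :=
  superficial_multiplicity_eq_general R d hd1 I hprim f hsup hnzd e e' heI heq
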